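/- arXiv:2102.08640 — 6 statements merged into one kernel-verified Lean document; each statement's English description precedes it below -/
import Mathlib

section
/- Let α > 0 and let τ : ℝ → ℝ be twice differentiable with τ(t) > 0 for all t, τ(0) = 1, τ'(0) = 0, and τ''(t) = α / (2 τ(t)^(1+α)) for all t ∈ ℝ. Then τ(t) → +∞ as t → +∞. -/
/-- The solution of the scaling ODE tends to `+∞` as `t → +∞`. -/
theorem scaling_ode_tendsto_atTop (α : ℝ) (hα : 0 < α) (τ τ' : ℝ → ℝ)
    (hpos : ∀ t, 0 < τ t) (hτ0 : τ 0 = 1) (hτ'0 : τ' 0 = 0)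
    (hd1 : ∀ t, HasDerivAt τ (τ' t) t)
    (hd2 : ∀ t, HasDerivAt τ' (α / (2 * τ t ^ (1 + α))) t) :
    Filter.Tendsto τ Filter.atTop Filter.atTop := by
  -- τ' is strictly increasing
  have hmono : StrictMono τ' := by
    apply strictMono_of_deriv_pos
    intro x
    rw [(hd2 x).deriv]
    have := Real.rpow_pos_of_pos (hpos x) (1 + α)
    positivity
  set c := τ' 1 with hc
  have hcpos : 0 < c := by
    have := hmono (show (0:ℝ) < 1 by norm_num)
    rwa [hτ'0] at this
  -- g t = τ t - c * t is monotone on [1, ∞)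
  have hg : MonotoneOn (fun t => τ t - c * t) (Set.Ici 1) := by
    apply monotoneOn_of_deriv_nonneg (convex_Ici 1)
    · have hct : Continuous τ := by
        have : Differentiable ℝ τ := fun t => (hd1 t).differentiableAt
        exact this.continuous
      exact (hct.sub (continuous_const.mul continuous_id)).continuousOn
    · intro x hx
      exact ((hd1 x).sub ((hasDerivAt_id x).const_mul c)).differentiableAt.differentiableWithinAt
    · intro x hx
      rw [interior_Ici] at hx
      have hder : HasDerivAt (fun t => τ t - c * t) (τ' x - c * 1) x :=
        (hd1 x).sub ((hasDerivAt_id x).const_mul c)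
      rw [hder.deriv]
      have : c ≤ τ' x := (hmono.le_iff_le).mpr (le_of_lt hx)
      linarith
  -- hence τ t ≥ τ 1 - c + c * t for t ≥ 1
  have hbound : ∀ t ≥ (1:ℝ), τ 1 - c + c * t ≤ τ t := by
    intro t ht
    have := hg (Set.self_mem_Ici) (Set.mem_Ici.mpr ht) ht
    simp only at this
    linarith
  have hlin : Filter.Tendsto (fun t => τ 1 - c + c * t) Filter.atTop Filter.atTop :=
    Filter.tendsto_atTop_add_const_left _ _
      (Filter.Tendsto.const_mul_atTop hcpos Filter.tendsto_id)
  apply Filter.tendsto_atTop_mono' _ _ hlin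
  filter_upwards [Filter.eventually_ge_atTop (1:ℝ)] with t ht using hbound t ht
end

section
/- Let α > 0 and let τ : ℝ → ℝ be twice differentiable with τ(t) > 0 for all t, τ(0) = 1, τ'(0) = 0, and τ''(t) = α / (2 τ(t)^(1+α)) for all t ∈ ℝ. Then τ'(t) → 1 as t → +∞. -/
/-!
Multiplying the equation by `τ'` shows that the energy `τ'² + τ^(-α)` is conserved, so it equals
its initial value `1`. Since `τ'' > 0`, `τ'` is strictly increasing; hence `τ' > 0` on `(0, ∞)` and
`τ` grows at least linearly, so `τ → ∞`. Then `τ' = √(1 - τ^(-α)) → 1`.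
-/

open Real Filter Topology

theorem tendsto_atTop_of_hasDerivAt_of_monotone {f f' : ℝ → ℝ}
    (hf : ∀ t, HasDerivAt f (f' t) t) (hmono : Monotone f') {a : ℝ} (ha : 0 < f' a) :
    Tendsto f atTop atTop := by
  have hlinear : ∀ t ≥ a, f' a * (t - a) ≤ f t - f a := fun t ht =>
    (convex_Ici a).mul_sub_le_image_sub_of_le_deriv
      (fun x _ => (hf x).continuousAt.continuousWithinAt)
      (fun x _ => (hf x).differentiableAt.differentiableWithinAt)
      (fun x hx => (hf x).deriv ▸ hmono (interior_subset hx : a ≤ x))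
      a Set.self_mem_Ici t ht ht
  refine tendsto_atTop_mono' atTop ?_ (tendsto_atTop_add_const_left atTop (f a)
    ((tendsto_atTop_add_const_right atTop (-a) tendsto_id).const_mul_atTop ha))
  filter_upwards [eventually_ge_atTop a] with t ht
  have := hlinear t ht
  simp only [id]
  linarith

section ScalingODE

variable {α : ℝ} {τ τ' : ℝ → ℝ}

theorem hasDerivAt_scaling_energy (hpos : ∀ t, 0 < τ t) (hd1 : ∀ t, HasDerivAt τ (τ' t) t)
    (hd2 : ∀ t, HasDerivAt τ' (α / (2 * τ t ^ (1 + α))) t) (t : ℝ) :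
    HasDerivAt (fun t => τ' t ^ 2 + τ t ^ (-α)) 0 t := by
  have hτ := hpos t
  have hpow : τ t ^ (-α - 1) = (τ t ^ (1 + α))⁻¹ := by
    rw [← rpow_neg hτ.le]; ring_nf
  have hpow_ne : τ t ^ (1 + α) ≠ 0 := (rpow_pos_of_pos hτ _).ne'
  refine (((hd2 t).pow 2).add ((hd1 t).rpow_const (Or.inl hτ.ne'))).congr_deriv ?_
  rw [hpow]
  field_simp
  ring

theorem scaling_energy_eq (hpos : ∀ t, 0 < τ t) (hd1 : ∀ t, HasDerivAt τ (τ' t) t)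
    (hd2 : ∀ t, HasDerivAt τ' (α / (2 * τ t ^ (1 + α))) t) (t : ℝ) :
    τ' t ^ 2 + τ t ^ (-α) = τ' 0 ^ 2 + τ 0 ^ (-α) :=
  have hE := hasDerivAt_scaling_energy hpos hd1 hd2
  is_const_of_deriv_eq_zero (fun t => (hE t).differentiableAt) (fun t => (hE t).deriv) t 0

theorem strictMono_scaling_deriv (hα : 0 < α) (hpos : ∀ t, 0 < τ t)
    (hd2 : ∀ t, HasDerivAt τ' (α / (2 * τ t ^ (1 + α))) t) : StrictMono τ' :=
  strictMono_of_hasDerivAt_pos hd2 fun t => by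
    have := rpow_pos_of_pos (hpos t) (1 + α)
    positivity

end ScalingODE

/-- The derivative of the solution of the scaling ODE tends to `1` as `t → +∞`. -/
theorem scaling_ode_deriv_tendsto_one (α : ℝ) (hα : 0 < α) (τ τ' : ℝ → ℝ)
    (hpos : ∀ t, 0 < τ t) (hτ0 : τ 0 = 1) (hτ'0 : τ' 0 = 0)
    (hd1 : ∀ t, HasDerivAt τ (τ' t) t)
    (hd2 : ∀ t, HasDerivAt τ' (α / (2 * τ t ^ (1 + α))) t) :
    Filter.Tendsto τ' Filter.atTop (nhds 1) := by
  have henergy : ∀ t, τ' t ^ 2 = 1 - τ t ^ (-α) := fun t => by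
    have := scaling_energy_eq hpos hd1 hd2 t
    rw [hτ0, hτ'0, one_rpow] at this
    linarith
  have hmono := strictMono_scaling_deriv hα hpos hd2
  have hτ'_pos : 0 < τ' 1 := hτ'0 ▸ hmono one_pos
  have hτ_top : Tendsto τ atTop atTop :=
    tendsto_atTop_of_hasDerivAt_of_monotone hd1 hmono.monotone hτ'_pos
  have hlim : Tendsto (fun t => √(1 - τ t ^ (-α))) atTop (𝓝 1) := by
    simpa using ((tendsto_rpow_neg_atTop hα).comp hτ_top).const_sub 1 |>.sqrt
  refine hlim.congr' ?_
  filter_upwards [eventually_ge_atTop 0] with t ht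
  rw [← henergy, sqrt_sq (hτ'0 ▸ hmono.monotone ht)]
end

section
/- Let α > 0 and let τ : ℝ → ℝ be twice differentiable with τ(t) > 0 for all t, τ(0) = 1, τ'(0) = 0, and τ''(t) = α / (2 τ(t)^(1+α)) for all t ∈ ℝ. Then τ(t)/t → 1 as t → +∞; in particular τ(t) is asymptotically equivalent to t at infinity. -/
/-!
Multiplying the equation by `τ'` shows that the energy `τ'² + τ^(-α)` is conserved, hence equal
to `1`. Since `τ'' > 0`, `τ'` increases, so `τ' ≥ τ'(1) > 0` on `[1, ∞)` and `τ → ∞`. Then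
`τ^(-α) → 0`, so `τ'² → 1` and `τ' → 1`, and `τ(t)/t → 1` follows as in the `∞/∞` case of
l'Hôpital's rule.
-/

open Filter Topology Set

theorem tendsto_atTop_of_le_hasDerivAt {f f' : ℝ → ℝ} {c T : ℝ} (hc : 0 < c)
    (hd : ∀ t, HasDerivAt f (f' t) t) (hle : ∀ t ≥ T, c ≤ f' t) :
    Tendsto f atTop atTop := by
  have hgrowth : ∀ t ≥ T, c * (t - T) ≤ f t - f T :=
    fun t ht => (convex_Ici T).mul_sub_le_image_sub_of_le_deriv
      (HasDerivAt.continuousOn fun x _ => hd x)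
      (fun x _ => (hd x).differentiableAt.differentiableWithinAt)
      (fun x hx => (hd x).deriv ▸ hle x (interior_Ici.subset hx).le)
      T (mem_Ici.2 le_rfl) t ht ht
  refine tendsto_atTop_mono' _ ?_ <| tendsto_atTop_add_const_right _ (f T - c * T)
    (tendsto_id.const_mul_atTop hc)
  filter_upwards [eventually_ge_atTop T] with t ht
  rw [id]
  linarith [hgrowth t ht]

theorem isLittleO_id_of_hasDerivAt_tendsto_zero {g g' : ℝ → ℝ}
    (hd : ∀ t, HasDerivAt g (g' t) t) (hl : Tendsto g' atTop (𝓝 0)) :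
    g =o[atTop] id := by
  refine Asymptotics.isLittleO_iff.2 fun c hc => ?_
  obtain ⟨T, hT⟩ := eventually_atTop.1 <| (eventually_ge_atTop 0).and <|
    hl.eventually <| Metric.closedBall_mem_nhds 0 (half_pos hc)
  filter_upwards [eventually_ge_atTop (max T (2 * ‖g T‖ / c))] with t ht
  obtain ⟨hTt, hgT⟩ := max_le_iff.1 ht
  have hT0 : 0 ≤ T := (hT T le_rfl).1
  have hincrement : ‖g t - g T‖ ≤ c / 2 * ‖t - T‖ :=
    (convex_Icc T t).norm_image_sub_le_of_norm_hasDerivWithin_le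
      (fun x _ => (hd x).hasDerivWithinAt)
      (fun x hx => by simpa using (hT x hx.1).2) (left_mem_Icc.2 hTt) (right_mem_Icc.2 hTt)
  rw [div_le_iff₀ hc] at hgT
  rw [Real.norm_of_nonneg (sub_nonneg.2 hTt)] at hincrement
  rw [id, Real.norm_of_nonneg (hT0.trans hTt)]
  calc ‖g t‖ ≤ ‖g t - g T‖ + ‖g T‖ := norm_le_norm_sub_add _ _
    _ ≤ c * t := by nlinarith [norm_nonneg (g T)]

theorem tendsto_div_id_of_hasDerivAt_tendsto {f f' : ℝ → ℝ} {L : ℝ}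
    (hd : ∀ t, HasDerivAt f (f' t) t) (hl : Tendsto f' atTop (𝓝 L)) :
    Tendsto (fun t => f t / t) atTop (𝓝 L) := by
  have hsmall : (fun t => f t - L * t) =o[atTop] id :=
    isLittleO_id_of_hasDerivAt_tendsto_zero (g' := fun t => f' t - L)
      (fun t => ((hd t).sub ((hasDerivAt_id t).const_mul L)).congr_deriv (by ring))
      (by simpa using hl.sub_const L)
  refine (zero_add L ▸ hsmall.tendsto_div_nhds_zero.add_const L).congr' ?_
  filter_upwards [eventually_ne_atTop 0] with t ht
  simp only [id]
  field_simp
  ring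

namespace ScalingODE

variable {α : ℝ} {τ τ' : ℝ → ℝ}

theorem hasDerivAt_energy (hpos : ∀ t, 0 < τ t) (hd1 : ∀ t, HasDerivAt τ (τ' t) t)
    (hd2 : ∀ t, HasDerivAt τ' (α / (2 * τ t ^ (1 + α))) t) (t : ℝ) :
    HasDerivAt (fun s => τ' s ^ 2 + τ s ^ (-α)) 0 t := by
  have hpow : τ t ^ (-α - 1) = (τ t ^ (1 + α))⁻¹ := by
    rw [← Real.rpow_neg (hpos t).le, neg_add', neg_sub_comm]
  refine (((hd2 t).pow 2).add ((hd1 t).rpow_const (.inl (hpos t).ne'))).congr_deriv ?_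
  rw [hpow]
  field_simp
  ring

theorem energy_eq (hpos : ∀ t, 0 < τ t) (hd1 : ∀ t, HasDerivAt τ (τ' t) t)
    (hd2 : ∀ t, HasDerivAt τ' (α / (2 * τ t ^ (1 + α))) t) (t : ℝ) :
    τ' t ^ 2 + τ t ^ (-α) = τ' 0 ^ 2 + τ 0 ^ (-α) :=
  is_const_of_deriv_eq_zero (fun x => (hasDerivAt_energy hpos hd1 hd2 x).differentiableAt)
    (fun x => (hasDerivAt_energy hpos hd1 hd2 x).deriv) t 0

theorem strictMono_deriv (hα : 0 < α) (hpos : ∀ t, 0 < τ t)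
    (hd2 : ∀ t, HasDerivAt τ' (α / (2 * τ t ^ (1 + α))) t) : StrictMono τ' :=
  strictMono_of_hasDerivAt_pos hd2 fun t => by
    have := Real.rpow_pos_of_pos (hpos t) (1 + α)
    positivity

end ScalingODE

open ScalingODE in
/-- The solution of the scaling ODE is asymptotically equivalent to `t`:
`τ(t)/t → 1` as `t → +∞`. -/
theorem scaling_ode_asymptotic (α : ℝ) (hα : 0 < α) (τ τ' : ℝ → ℝ)
    (hpos : ∀ t, 0 < τ t) (hτ0 : τ 0 = 1) (hτ'0 : τ' 0 = 0)
    (hd1 : ∀ t, HasDerivAt τ (τ' t) t)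
    (hd2 : ∀ t, HasDerivAt τ' (α / (2 * τ t ^ (1 + α))) t) :
    Filter.Tendsto (fun t => τ t / t) Filter.atTop (nhds 1) := by
  have henergy : ∀ t, τ' t ^ 2 = 1 - τ t ^ (-α) := fun t => by
    linarith [energy_eq hpos hd1 hd2 t, show τ' 0 ^ 2 + τ 0 ^ (-α) = 1 by simp [hτ0, hτ'0]]
  have hmono := strictMono_deriv hα hpos hd2
  have hτ_top : Tendsto τ atTop atTop :=
    tendsto_atTop_of_le_hasDerivAt (hτ'0 ▸ hmono one_pos) hd1 fun t ht => hmono.monotone ht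
  have hsq : Tendsto (fun t => τ' t ^ 2) atTop (𝓝 1) := by
    simpa [henergy] using ((tendsto_rpow_neg_atTop hα).comp hτ_top).const_sub 1
  have hτ'_lim : Tendsto τ' atTop (𝓝 1) := by
    refine (Real.sqrt_one ▸ hsq.sqrt).congr' ?_
    filter_upwards [eventually_ge_atTop 0] with t ht
    exact Real.sqrt_sq (hτ'0 ▸ hmono.monotone ht)
  exact tendsto_div_id_of_hasDerivAt_tendsto hd1 hτ'_lim
end

section
/- Let α > 0 and let τ : ℝ → ℝ be twice differentiable with τ(t) > 0 for all t, τ(0) = 1, τ'(0) = 0, and τ''(t) = α / (2 τ(t)^(1+α)) for all t ∈ ℝ. Then there exists a constant c > 0 such that τ(t) ≥ c(1 + t) for all t ≥ 0. -/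
/-!
Since `τ'' > 0`, `τ` is convex and `τ'` is strictly increasing, so `τ'(1) > τ'(0) = 0`.
The tangent lines of `τ` at `0` and at `1` then give `τ ≥ 1` and `τ(t) ≥ 1 + τ'(1) (t - 1)`
on `[0, ∞)`, and together these bound `τ` below by a multiple of `1 + t`.
-/

lemma add_deriv_mul_sub_le_of_monotone_deriv {f f' : ℝ → ℝ}
    (hf : ∀ t, HasDerivAt f (f' t) t) (hf' : Monotone f') {s t : ℝ} (hst : s ≤ t) :
    f s + f' s * (t - s) ≤ f t := by
  rcases hst.eq_or_lt with rfl | hlt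
  · simp
  have hconvex : ConvexOn ℝ Set.univ f := by
    refine Monotone.convexOn_univ_of_deriv (fun x ↦ (hf x).differentiableAt) ?_
    simpa only [funext fun x ↦ (hf x).deriv] using hf'
  have hslope : f' s ≤ (f t - f s) / (t - s) := by
    simpa only [slope_def_field] using
      hconvex.le_slope_of_hasDerivAt trivial trivial hlt (hf s)
  rw [le_div_iff₀ (sub_pos.2 hlt)] at hslope
  linarith

/-- Linear lower bound for the solution of the scaling ODE:
there is `c > 0` with `τ(t) ≥ c (1 + t)` for all `t ≥ 0`. -/
theorem scaling_ode_linear_lower_bound (α : ℝ) (hα : 0 < α) (τ τ' : ℝ → ℝ)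
    (hpos : ∀ t, 0 < τ t) (hτ0 : τ 0 = 1) (hτ'0 : τ' 0 = 0)
    (hd1 : ∀ t, HasDerivAt τ (τ' t) t)
    (hd2 : ∀ t, HasDerivAt τ' (α / (2 * τ t ^ (1 + α))) t) :
    ∃ c > 0, ∀ t ≥ (0 : ℝ), c * (1 + t) ≤ τ t := by
  have hτ'mono : StrictMono τ' := strictMono_of_hasDerivAt_pos hd2 fun t ↦
    div_pos hα (mul_pos two_pos (Real.rpow_pos_of_pos (hpos t) _))
  set m := τ' 1
  have hm : 0 < m := hτ'0 ▸ hτ'mono one_pos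
  have hge_one : ∀ t ≥ (0 : ℝ), 1 ≤ τ t := fun t ht ↦ by
    simpa [hτ0, hτ'0] using add_deriv_mul_sub_le_of_monotone_deriv hd1 hτ'mono.monotone ht
  have hge_line : ∀ t ≥ (1 : ℝ), 1 + m * (t - 1) ≤ τ t := fun t ht ↦ by
    linarith [hge_one 1 zero_le_one,
      add_deriv_mul_sub_le_of_monotone_deriv hd1 hτ'mono.monotone ht]
  refine ⟨min 1 m / 2, by positivity, fun t ht ↦ ?_⟩
  have hc₁ : min 1 m ≤ 1 := min_le_left _ _
  have hc₂ : min 1 m ≤ m := min_le_right _ _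
  rcases le_total t 1 with ht1 | ht1
  · nlinarith [hge_one t ht]
  · nlinarith [hge_line t ht1]
end

section
/- Let α ∈ (0, 2] with α ≠ 1, let ν ≥ 0 and c ∈ (0, 1]. Let τ : [0, ∞) → ℝ be continuously differentiable with τ(0) = 1, 0 ≤ τ'(t) ≤ 1 and τ(t) ≥ c(1 + t) for all t ≥ 0. Let E : [0, ∞) → [0, ∞) be differentiable and satisfy E'(t) ≤ −α (τ'(t)/τ(t)) E(t) + 2ν (τ'(t)/τ(t))² for all t ≥ 0. Then there exists a constant C > 0, depending only on E(0), ν, α and c, such that E(t) ≤ C ((1 + t)^(−α) + ν (1 + t)^(−1)) for all t ≥ 0. -/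
set_option maxHeartbeats 1000000 in
/-- Gronwall-type integration of the pseudo-energy inequality, case `α ≠ 1`:
if `E' ≤ -α (τ'/τ) E + 2ν (τ'/τ)²`, then `E(t) ≤ C((1+t)^{-α} + ν(1+t)^{-1})`. -/
theorem pseudo_energy_decay_ne_one (α ν c : ℝ) (hα : 0 < α) (hα2 : α ≤ 2) (hα1 : α ≠ 1)
    (hν : 0 ≤ ν) (hc : 0 < c) (hc1 : c ≤ 1)
    (τ τ' E E' : ℝ → ℝ)
    (hτ0 : τ 0 = 1)
    (hτd : ∀ t ≥ (0 : ℝ), HasDerivAt τ (τ' t) t)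
    (hτ'cont : ContinuousOn τ' (Set.Ici 0))
    (hτ'nonneg : ∀ t ≥ (0 : ℝ), 0 ≤ τ' t)
    (hτ'le : ∀ t ≥ (0 : ℝ), τ' t ≤ 1)
    (hτlb : ∀ t ≥ (0 : ℝ), c * (1 + t) ≤ τ t)
    (hEnonneg : ∀ t ≥ (0 : ℝ), 0 ≤ E t)
    (hEd : ∀ t ≥ (0 : ℝ), HasDerivAt E (E' t) t)
    (hineq : ∀ t ≥ (0 : ℝ), E' t ≤ -α * (τ' t / τ t) * E t + 2 * ν * (τ' t / τ t) ^ 2) :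
    ∃ C > 0, ∀ t ≥ (0 : ℝ), E t ≤ C * ((1 + t) ^ (-α) + ν * (1 + t)⁻¹) := by
  have hαne : α - 1 ≠ 0 := sub_ne_zero.2 hα1
  have hτpos : ∀ t ≥ (0 : ℝ), 0 < τ t := by
    intro t ht
    have h1t : (0:ℝ) < 1 + t := by linarith
    exact lt_of_lt_of_le (mul_pos hc h1t) (hτlb t ht)
  set G : ℝ → ℝ := fun t => τ t ^ α * E t - 2 * ν / (α - 1) * τ t ^ (α - 1) with hGdef
  have hGd : ∀ t ≥ (0 : ℝ), HasDerivAt G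
      (τ' t * α * τ t ^ (α - 1) * E t + τ t ^ α * E' t
        - 2 * ν / (α - 1) * (τ' t * (α - 1) * τ t ^ (α - 1 - 1))) t := by
    intro t ht
    have hne : τ t ≠ 0 := (hτpos t ht).ne'
    exact (((hτd t ht).rpow_const (Or.inl hne)).mul (hEd t ht)).sub
      (((hτd t ht).rpow_const (Or.inl hne)).const_mul _)
  have hG' : ∀ t ∈ Set.Ioi (0:ℝ), deriv G t ≤ 0 := by
    intro t ht
    have ht' : (0:ℝ) ≤ t := le_of_lt ht
    rw [(hGd t ht').deriv]
    have hP : 0 < τ t := hτpos t ht'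
    have hA : 0 < τ t ^ α := Real.rpow_pos_of_pos hP α
    have h1 : τ t ^ (α - 1) = τ t ^ α / τ t := by
      rw [Real.rpow_sub_one hP.ne', ]
    have h2 : τ t ^ (α - 1 - 1) = τ t ^ α / τ t / τ t := by
      rw [Real.rpow_sub_one hP.ne', Real.rpow_sub_one hP.ne']
    rw [h1, h2]
    have hcancel : 2 * ν / (α - 1) * (τ' t * (α - 1) * (τ t ^ α / τ t / τ t))
        = 2 * ν * τ' t * (τ t ^ α / τ t / τ t) := by
      field_simp
    rw [hcancel]
    have hE' : τ t ^ α * E' t ≤ τ t ^ α * (-α * (τ' t / τ t) * E t + 2 * ν * (τ' t / τ t) ^ 2) :=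
      mul_le_mul_of_nonneg_left (hineq t ht') hA.le
    have hkey : τ' t * α * (τ t ^ α / τ t) * E t
        + τ t ^ α * (-α * (τ' t / τ t) * E t + 2 * ν * (τ' t / τ t) ^ 2)
        = 2 * ν * (τ t ^ α / τ t / τ t) * τ' t ^ 2 := by
      field_simp
      ring
    have hq0 : 0 ≤ τ' t := hτ'nonneg t ht'
    have hq1 : τ' t ≤ 1 := hτ'le t ht'
    have hAP : 0 ≤ τ t ^ α / τ t / τ t := by positivity
    have hlast : 2 * ν * (τ t ^ α / τ t / τ t) * τ' t ^ 2
        ≤ 2 * ν * τ' t * (τ t ^ α / τ t / τ t) := by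
      have hqq : τ' t ^ 2 ≤ τ' t := by nlinarith
      calc 2 * ν * (τ t ^ α / τ t / τ t) * τ' t ^ 2
          ≤ 2 * ν * (τ t ^ α / τ t / τ t) * τ' t := by
            apply mul_le_mul_of_nonneg_left hqq; positivity
        _ = 2 * ν * τ' t * (τ t ^ α / τ t / τ t) := by ring
    nlinarith [hE', hkey, hlast]
  have hanti : AntitoneOn G (Set.Ici 0) := by
    apply antitoneOn_of_deriv_nonpos (convex_Ici 0)
    · exact fun t ht => (hGd t ht).continuousAt.continuousWithinAt
    · rw [interior_Ici]
      exact fun t ht => (hGd t (le_of_lt ht)).differentiableAt.differentiableWithinAt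
    · rw [interior_Ici]; exact hG'
  have hG0 : G 0 = E 0 - 2 * ν / (α - 1) := by
    simp [hGdef, hτ0, Real.one_rpow]
  have hGle : ∀ t ≥ (0 : ℝ),
      τ t ^ α * E t ≤ E 0 - 2 * ν / (α - 1) + 2 * ν / (α - 1) * τ t ^ (α - 1) := by
    intro t ht
    have := hanti Set.self_mem_Ici ht ht
    rw [hG0] at this
    simp only [hGdef] at this
    linarith
  -- lower bound on (c(1+t))^α
  have hbase : ∀ t ≥ (0 : ℝ), c ^ α * (1 + t) ^ α ≤ τ t ^ α := by
    intro t ht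
    have h1t : (0:ℝ) ≤ 1 + t := by linarith
    rw [← Real.mul_rpow hc.le h1t]
    exact Real.rpow_le_rpow (by positivity) (hτlb t ht) hα.le
  have h1tpos : ∀ t ≥ (0 : ℝ), (0:ℝ) < 1 + t := fun t ht => by linarith
  have hnegrpow : ∀ t ≥ (0 : ℝ), (1 + t) ^ (-α) = ((1 + t) ^ α)⁻¹ := by
    intro t ht
    rw [Real.rpow_neg (h1tpos t ht).le]
  rcases lt_or_gt_of_ne hα1 with hlt | hgt
  · -- α < 1
    have hmono : MonotoneOn τ (Set.Ici 0) := by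
      apply monotoneOn_of_deriv_nonneg (convex_Ici 0)
      · exact fun t ht => (hτd t ht).continuousAt.continuousWithinAt
      · rw [interior_Ici]
        exact fun t ht => (hτd t (le_of_lt ht)).differentiableAt.differentiableWithinAt
      · rw [interior_Ici]
        intro t ht
        rw [(hτd t (le_of_lt ht)).deriv]
        exact hτ'nonneg t (le_of_lt ht)
    have hτ1 : ∀ t ≥ (0 : ℝ), 1 ≤ τ t := by
      intro t ht
      have := hmono Set.self_mem_Ici ht ht
      rwa [hτ0] at this
    set K : ℝ := E 0 + 2 * ν / (1 - α) with hKdef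
    have hKnn : 0 ≤ K := by
      have h1 : 0 ≤ 2 * ν / (1 - α) := div_nonneg (by positivity) (by linarith)
      simp only [hKdef]
      linarith [hEnonneg 0 le_rfl]
    have hKb : ∀ t ≥ (0 : ℝ), τ t ^ α * E t ≤ K := by
      intro t ht
      have h1 : τ t ^ (α - 1) ≤ 1 :=
        Real.rpow_le_one_of_one_le_of_nonpos (hτ1 t ht) (by linarith)
      have h0 : 0 ≤ τ t ^ (α - 1) := Real.rpow_nonneg (hτpos t ht).le _
      have hfrac : 2 * ν / (α - 1) ≤ 0 := by
        apply div_nonpos_of_nonneg_of_nonpos (by positivity) (by linarith)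
      have hterm : 2 * ν / (α - 1) * τ t ^ (α - 1) ≤ 0 :=
        mul_nonpos_of_nonpos_of_nonneg hfrac h0
      have heqd : -(2 * ν / (α - 1)) = 2 * ν / (1 - α) := by
        rw [← div_neg, neg_sub]
      have := hGle t ht
      simp only [hKdef]
      nlinarith
    have hcA0 : (0:ℝ) < c ^ α := Real.rpow_pos_of_pos hc α
    refine ⟨K / c ^ α + 1, by nlinarith [div_nonneg hKnn hcA0.le], ?_⟩
    intro t ht
    have hA : 0 < τ t ^ α := Real.rpow_pos_of_pos (hτpos t ht) α
    have hcA : (0:ℝ) < c ^ α := Real.rpow_pos_of_pos hc α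
    have h1A : (0:ℝ) < (1 + t) ^ α := Real.rpow_pos_of_pos (h1tpos t ht) α
    have hE1 : E t ≤ K / τ t ^ α := by
      rw [le_div_iff₀ hA]
      nlinarith [hKb t ht]
    have hE2 : K / τ t ^ α ≤ K / (c ^ α * (1 + t) ^ α) :=
      div_le_div_of_nonneg_left hKnn (by positivity) (hbase t ht)
    have hE3 : K / (c ^ α * (1 + t) ^ α) = K / c ^ α * (1 + t) ^ (-α) := by
      rw [hnegrpow t ht]
      field_simp
    have hnn1 : (0:ℝ) ≤ (1 + t) ^ (-α) := Real.rpow_nonneg (h1tpos t ht).le _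
    have hnn2 : (0:ℝ) ≤ ν * (1 + t)⁻¹ := by
      have := (h1tpos t ht).le
      positivity
    have hKc : (0:ℝ) ≤ K / c ^ α := by positivity
    nlinarith [hE1, hE2, hE3]
  · -- α > 1
    have hα1' : (0:ℝ) < α - 1 := by linarith
    have hcA0 : (0:ℝ) < c ^ α := Real.rpow_pos_of_pos hc α
    have hE00 : (0:ℝ) ≤ E 0 / c ^ α := div_nonneg (hEnonneg 0 le_rfl) hcA0.le
    have hq0 : (0:ℝ) < 2 / ((α - 1) * c) := by positivity
    refine ⟨E 0 / c ^ α + 2 / ((α - 1) * c) + 1, by linarith, ?_⟩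
    intro t ht
    have hP : 0 < τ t := hτpos t ht
    have hA : 0 < τ t ^ α := Real.rpow_pos_of_pos hP α
    have hcA : (0:ℝ) < c ^ α := Real.rpow_pos_of_pos hc α
    have h1t : (0:ℝ) < 1 + t := h1tpos t ht
    have h1A : (0:ℝ) < (1 + t) ^ α := Real.rpow_pos_of_pos h1t α
    have hfrac : 0 ≤ 2 * ν / (α - 1) := by positivity
    have h1 : τ t ^ (α - 1) = τ t ^ α / τ t := Real.rpow_sub_one hP.ne' α
    have hGt := hGle t ht
    rw [h1] at hGt
    -- τ^α E ≤ E0 + (2ν/(α-1)) τ^α/τ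
    have hGt2 : τ t ^ α * E t ≤ E 0 + 2 * ν / (α - 1) * (τ t ^ α / τ t) := by linarith
    have hE1 : E t ≤ E 0 / τ t ^ α + 2 * ν / (α - 1) / τ t := by
      rw [div_add_div _ _ hA.ne' hP.ne', le_div_iff₀ (mul_pos hA hP)]
      calc E t * (τ t ^ α * τ t) = (τ t ^ α * E t) * τ t := by ring
        _ ≤ (E 0 + 2 * ν / (α - 1) * (τ t ^ α / τ t)) * τ t :=
            mul_le_mul_of_nonneg_right hGt2 hP.le
        _ = E 0 * τ t + 2 * ν / (α - 1) * (τ t ^ α / τ t * τ t) := by ring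
        _ = E 0 * τ t + τ t ^ α * (2 * ν / (α - 1)) := by
            rw [div_mul_cancel₀ _ hP.ne']; ring
    have hb1 : E 0 / τ t ^ α ≤ E 0 / c ^ α * (1 + t) ^ (-α) := by
      have h2 : E 0 / τ t ^ α ≤ E 0 / (c ^ α * (1 + t) ^ α) :=
        div_le_div_of_nonneg_left (hEnonneg 0 le_rfl) (by positivity) (hbase t ht)
      have h3 : E 0 / (c ^ α * (1 + t) ^ α) = E 0 / c ^ α * (1 + t) ^ (-α) := by
        rw [hnegrpow t ht]; field_simp
      linarith [h2, h3.le, h3.ge]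
    have hb2 : 2 * ν / (α - 1) / τ t ≤ 2 / ((α - 1) * c) * (ν * (1 + t)⁻¹) := by
      have h2 : 2 * ν / (α - 1) / τ t ≤ 2 * ν / (α - 1) / (c * (1 + t)) :=
        div_le_div_of_nonneg_left hfrac (by positivity) (hτlb t ht)
      have h3 : 2 * ν / (α - 1) / (c * (1 + t)) = 2 / ((α - 1) * c) * (ν * (1 + t)⁻¹) := by
        field_simp
        try ring
        try tauto
      linarith [h2, h3.le]
    have hnn1 : (0:ℝ) ≤ (1 + t) ^ (-α) := Real.rpow_nonneg h1t.le _
    have hnn2 : (0:ℝ) ≤ ν * (1 + t)⁻¹ := by positivity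
    have hc1' : (0:ℝ) ≤ E 0 / c ^ α := by
      have := hEnonneg 0 le_rfl; positivity
    have hc2' : (0:ℝ) ≤ 2 / ((α - 1) * c) := by positivity
    nlinarith [hE1, hb1, hb2]
end

section
/- Let ν ≥ 0 and c ∈ (0, 1]. Let τ : [0, ∞) → ℝ be continuously differentiable with τ(0) = 1, 0 ≤ τ'(t) ≤ 1 and τ(t) ≥ c(1 + t) for all t ≥ 0. Let E : [0, ∞) → [0, ∞) be differentiable and satisfy E'(t) ≤ −(τ'(t)/τ(t)) E(t) + 2ν (τ'(t)/τ(t))² for all t ≥ 0. Then there exists a constant C > 0, depending only on E(0), ν and c, such that E(t) ≤ C (1 + t)^(−1) (1 + ν log(1 + t)) for all t ≥ 0. -/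
/-!
Along the flow, `G = τ E - 2ν log τ` is nonincreasing: the inequality for `E'` gives
`G' ≤ 2ν τ' (τ' - 1) / τ ≤ 0` because `0 ≤ τ' ≤ 1`. Hence `τ E ≤ E(0) + 2ν log τ`, and
`c (1 + t) ≤ τ ≤ 1 + t` turns this into the stated decay.
-/

open Real Set

lemma antitoneOn_Ici_of_hasDerivAt_nonpos {f f' : ℝ → ℝ} {a : ℝ}
    (hf : ∀ t ≥ a, HasDerivAt f (f' t) t) (hf' : ∀ t ≥ a, f' t ≤ 0) :
    AntitoneOn f (Ici a) :=
  antitoneOn_of_hasDerivWithinAt_nonpos (convex_Ici a)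
    (fun t ht => (hf t ht).continuousAt.continuousWithinAt)
    (fun t ht => (hf t (interior_subset ht)).hasDerivWithinAt)
    (fun t ht => hf' t (interior_subset ht))

lemma le_add_sub_of_hasDerivAt_le_one {f f' : ℝ → ℝ} {a t : ℝ}
    (hf : ∀ s ≥ a, HasDerivAt f (f' s) s) (hf' : ∀ s ≥ a, f' s ≤ 1) (ht : a ≤ t) :
    f t ≤ f a + (t - a) := by
  have hanti : AntitoneOn (fun s => f s - s) (Ici a) :=
    antitoneOn_Ici_of_hasDerivAt_nonpos (f' := fun s => f' s - 1)
      (fun s hs => (hf s hs).sub (hasDerivAt_id s)) (fun s hs => by linarith [hf' s hs])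
  linarith [hanti self_mem_Ici ht ht]

lemma pseudoEnergy_lyapunov_deriv_nonpos {ν T T' e e' : ℝ} (hν : 0 ≤ ν) (hT : 0 < T)
    (hT'₀ : 0 ≤ T') (hT'₁ : T' ≤ 1) (he' : e' ≤ -(T' / T) * e + 2 * ν * (T' / T) ^ 2) :
    T' * e + T * e' - 2 * ν * (T' / T) ≤ 0 := by
  have hmul : T * e' ≤ -(T' * e) + 2 * ν * T' ^ 2 / T := by
    calc T * e' ≤ T * (-(T' / T) * e + 2 * ν * (T' / T) ^ 2) :=
          mul_le_mul_of_nonneg_left he' hT.le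
      _ = -(T' * e) + 2 * ν * T' ^ 2 / T := by field_simp
  have hgain : 2 * ν * T' ^ 2 / T - 2 * ν * (T' / T) = 2 * ν * (T' * (T' - 1)) / T := by ring
  have hsign : 2 * ν * (T' * (T' - 1)) / T ≤ 0 :=
    div_nonpos_of_nonpos_of_nonneg
      (mul_nonpos_of_nonneg_of_nonpos (by positivity) (mul_nonpos_of_nonneg_of_nonpos hT'₀ (by linarith)))
      hT.le
  linarith

lemma pseudoEnergy_lyapunov_antitoneOn {ν : ℝ} {τ τ' E E' : ℝ → ℝ} (hν : 0 ≤ ν)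
    (hτpos : ∀ t ≥ (0 : ℝ), 0 < τ t)
    (hτd : ∀ t ≥ (0 : ℝ), HasDerivAt τ (τ' t) t)
    (hτ'nonneg : ∀ t ≥ (0 : ℝ), 0 ≤ τ' t)
    (hτ'le : ∀ t ≥ (0 : ℝ), τ' t ≤ 1)
    (hEd : ∀ t ≥ (0 : ℝ), HasDerivAt E (E' t) t)
    (hineq : ∀ t ≥ (0 : ℝ), E' t ≤ -(τ' t / τ t) * E t + 2 * ν * (τ' t / τ t) ^ 2) :
    AntitoneOn (fun t => τ t * E t - 2 * ν * log (τ t)) (Ici 0) :=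
  antitoneOn_Ici_of_hasDerivAt_nonpos
    (fun t ht => ((hτd t ht).mul (hEd t ht)).sub
      (((hτd t ht).log (hτpos t ht).ne').const_mul (2 * ν)))
    (fun t ht => pseudoEnergy_lyapunov_deriv_nonpos hν (hτpos t ht) (hτ'nonneg t ht)
      (hτ'le t ht) (hineq t ht))

/-- `max e₀ 2` absorbs both `e₀` and the factor `2` of `ν log s`, and is positive whatever the sign of `e₀`. -/
lemma le_max_div_mul_inv_mul_of_mul_le_add_log {ν c s T x e₀ : ℝ} (hν : 0 ≤ ν) (hc : 0 < c)
    (hs : 1 ≤ s) (hT : c * s ≤ T) (h : T * x ≤ e₀ + 2 * ν * log s) :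
    x ≤ max e₀ 2 / c * s⁻¹ * (1 + ν * log s) := by
  have hlog : 0 ≤ ν * log s := mul_nonneg hν (log_nonneg hs)
  have hM : 2 ≤ max e₀ 2 := le_max_right _ _
  have hrhs : max e₀ 2 / c * s⁻¹ * (1 + ν * log s) = max e₀ 2 * (1 + ν * log s) / (c * s) := by
    field_simp
  rw [hrhs]
  rcases le_or_gt x 0 with hx | hx
  · exact hx.trans (by positivity)
  · rw [le_div_iff₀ (by positivity)]
    calc x * (c * s) ≤ T * x := by nlinarith
      _ ≤ e₀ + 2 * ν * log s := h
      _ ≤ max e₀ 2 * (1 + ν * log s) := by nlinarith [le_max_left e₀ 2]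

theorem pseudo_energy_decay_eq_one_general (ν c : ℝ) (hν : 0 ≤ ν) (hc : 0 < c)
    (τ τ' E E' : ℝ → ℝ)
    (hτ0 : τ 0 = 1)
    (hτd : ∀ t ≥ (0 : ℝ), HasDerivAt τ (τ' t) t)
    (hτ'nonneg : ∀ t ≥ (0 : ℝ), 0 ≤ τ' t)
    (hτ'le : ∀ t ≥ (0 : ℝ), τ' t ≤ 1)
    (hτlb : ∀ t ≥ (0 : ℝ), c * (1 + t) ≤ τ t)
    (hEd : ∀ t ≥ (0 : ℝ), HasDerivAt E (E' t) t)
    (hineq : ∀ t ≥ (0 : ℝ), E' t ≤ -(τ' t / τ t) * E t + 2 * ν * (τ' t / τ t) ^ 2) :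
    ∃ C > 0, ∀ t ≥ (0 : ℝ), E t ≤ C * (1 + t)⁻¹ * (1 + ν * Real.log (1 + t)) := by
  have hτpos : ∀ t ≥ (0 : ℝ), 0 < τ t := fun t ht =>
    lt_of_lt_of_le (by positivity) (hτlb t ht)
  have hG := pseudoEnergy_lyapunov_antitoneOn hν hτpos hτd hτ'nonneg hτ'le hEd hineq
  refine ⟨max (E 0) 2 / c, by positivity, fun t ht => ?_⟩
  have hτub : τ t ≤ 1 + t := by
    simpa [hτ0, add_comm] using le_add_sub_of_hasDerivAt_le_one hτd hτ'le ht
  have hweighted : τ t * E t ≤ E 0 + 2 * ν * log (1 + t) := by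
    have hmono := hG self_mem_Ici ht ht
    simp only [hτ0, log_one, one_mul, mul_zero, sub_zero] at hmono
    have hlog := mul_le_mul_of_nonneg_left (log_le_log (hτpos t ht) hτub)
      (by positivity : (0 : ℝ) ≤ 2 * ν)
    linarith
  exact le_max_div_mul_inv_mul_of_mul_le_add_log hν hc (by linarith) (hτlb t ht) hweighted

/-- Gronwall-type integration of the pseudo-energy inequality, case `α = 1`:
if `E' ≤ -(τ'/τ) E + 2ν (τ'/τ)²`, then `E(t) ≤ C (1+t)^{-1}(1 + ν log(1+t))`. -/
theorem pseudo_energy_decay_eq_one (ν c : ℝ) (hν : 0 ≤ ν) (hc : 0 < c) (hc1 : c ≤ 1)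
    (τ τ' E E' : ℝ → ℝ)
    (hτ0 : τ 0 = 1)
    (hτd : ∀ t ≥ (0 : ℝ), HasDerivAt τ (τ' t) t)
    (hτ'cont : ContinuousOn τ' (Set.Ici 0))
    (hτ'nonneg : ∀ t ≥ (0 : ℝ), 0 ≤ τ' t)
    (hτ'le : ∀ t ≥ (0 : ℝ), τ' t ≤ 1)
    (hτlb : ∀ t ≥ (0 : ℝ), c * (1 + t) ≤ τ t)
    (hEnonneg : ∀ t ≥ (0 : ℝ), 0 ≤ E t)
    (hEd : ∀ t ≥ (0 : ℝ), HasDerivAt E (E' t) t)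
    (hineq : ∀ t ≥ (0 : ℝ), E' t ≤ -(τ' t / τ t) * E t + 2 * ν * (τ' t / τ t) ^ 2) :
    ∃ C > 0, ∀ t ≥ (0 : ℝ), E t ≤ C * (1 + t)⁻¹ * (1 + ν * Real.log (1 + t)) :=
  pseudo_energy_decay_eq_one_general ν c hν hc τ τ' E E' hτ0 hτd hτ'nonneg hτ'le hτlb hEd hineq
end
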